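/- arXiv:2603.18980 — 3 statements merged into one kernel-verified Lean document; each statement's English description precedes it below -/
import Mathlib

section
/- Let A₀ ∈ ℝ^{l×n} be nonzero, b ∈ ℝ^l, let 𝒜 : ℝ^p × ℝ^n → ℝ^l be a nonzero bilinear map, and let Γ₁, Γ₂, Γ₃ be symmetric positive definite matrices of sizes l, p, n respectively. Then the Tikhonov functional Φ(y,x) = ‖b - A₀x - 𝒜(y,x)‖²_{Γ₁⁻¹} + ‖y‖²_{Γ₂⁻¹} + ‖x‖²_{Γ₃⁻¹} is not a convex function on ℝ^p × ℝ^n. -/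
/-!
Restrict Φ to the plane `(α, β) ↦ (α • y₀, β • x₀)` with `B = 𝒜 y₀ x₀ ≠ 0`. There the residual is
`b - β A₀ x₀ - αβ B`, so Φ contains the quartic term `(αβ)² ‖B‖²`. Along the line through `(t, -t)`
in direction `(1, 1)` the product `αβ = s² - t²` makes this term contribute `-4 t² ‖B‖²` to the
second difference, while all other contributions are `O(t)`; for large `t` the midpoint inequality
of a convex function fails.
-/

open Matrix Set

section QuadraticForm

variable {ι R : Type*} [Fintype ι] [CommRing R] {M : Matrix ι ι R}

theorem Matrix.IsSymm.dotProduct_mulVec_comm (hM : M.IsSymm) (u v : ι → R) :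
    u ⬝ᵥ (M *ᵥ v) = v ⬝ᵥ (M *ᵥ u) := by
  rw [← dotProduct_transpose_mulVec, hM.eq]

theorem smul_dotProduct_mulVec_smul (M : Matrix ι ι R) (s : R) (u : ι → R) :
    (s • u) ⬝ᵥ (M *ᵥ (s • u)) = s ^ 2 * (u ⬝ᵥ (M *ᵥ u)) := by
  rw [mulVec_smul, dotProduct_smul, smul_dotProduct, smul_eq_mul, smul_eq_mul]
  ring

theorem Matrix.IsSymm.dotProduct_mulVec_sub_smul_sub_smul (hM : M.IsSymm) (r c d : ι → R)
    (s u : R) :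
    (r - s • c - u • d) ⬝ᵥ (M *ᵥ (r - s • c - u • d)) =
      r ⬝ᵥ (M *ᵥ r) + s ^ 2 * (c ⬝ᵥ (M *ᵥ c)) + u ^ 2 * (d ⬝ᵥ (M *ᵥ d))
        - 2 * s * (r ⬝ᵥ (M *ᵥ c)) - 2 * u * (r ⬝ᵥ (M *ᵥ d)) + 2 * s * u * (c ⬝ᵥ (M *ᵥ d)) := by
  simp only [mulVec_sub, mulVec_smul, sub_dotProduct, smul_dotProduct, dotProduct_sub,
    dotProduct_smul, smul_eq_mul, hM.dotProduct_mulVec_comm c r, hM.dotProduct_mulVec_comm d r,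
    hM.dotProduct_mulVec_comm d c]
  ring

end QuadraticForm

theorem ConvexOn.two_mul_le_add_sub {E : Type*} [AddCommGroup E] [Module ℝ E] {f : E → ℝ}
    (hf : ConvexOn ℝ univ f) (z w : E) : 2 * f z ≤ f (z + w) + f (z - w) := by
  have h := hf.2 (mem_univ (z + w)) (mem_univ (z - w)) (by norm_num : (0 : ℝ) ≤ 1 / 2)
    (by norm_num : (0 : ℝ) ≤ 1 / 2) (by norm_num)
  have hmid : (1 / 2 : ℝ) • (z + w) + (1 / 2 : ℝ) • (z - w) = z := by module
  rw [hmid, smul_eq_mul, smul_eq_mul] at h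
  linarith

theorem exists_lt_mul_sq_add_mul {a : ℝ} (ha : 0 < a) (b c : ℝ) :
    ∃ t, c < a * t ^ 2 + b * t := by
  refine ⟨(|b| + |c| + 1) / a + 1, ?_⟩
  set t := (|b| + |c| + 1) / a + 1
  have ht : 1 ≤ t := le_add_of_nonneg_left (by positivity)
  have hat : |b| + |c| + 1 ≤ a * t := by
    rw [mul_add, mul_div_cancel₀ _ ha.ne']
    linarith
  nlinarith [neg_abs_le b, le_abs_self c, abs_nonneg c]

section Tikhonov

variable {m p n : Type*} [Fintype m] [Fintype p] [Fintype n]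

/-- The weights `W₁, W₂, W₃` stand for the inverse covariances `Γ₁⁻¹, Γ₂⁻¹, Γ₃⁻¹`. -/
noncomputable def tikhonov (A₀ : Matrix m n ℝ) (𝒜 : (p → ℝ) →ₗ[ℝ] (n → ℝ) →ₗ[ℝ] (m → ℝ))
    (b : m → ℝ) (W₁ : Matrix m m ℝ) (W₂ : Matrix p p ℝ) (W₃ : Matrix n n ℝ)
    (z : (p → ℝ) × (n → ℝ)) : ℝ :=
  (b - A₀ *ᵥ z.2 - 𝒜 z.1 z.2) ⬝ᵥ (W₁ *ᵥ (b - A₀ *ᵥ z.2 - 𝒜 z.1 z.2))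
    + z.1 ⬝ᵥ (W₂ *ᵥ z.1) + z.2 ⬝ᵥ (W₃ *ᵥ z.2)

variable (A₀ : Matrix m n ℝ) (𝒜 : (p → ℝ) →ₗ[ℝ] (n → ℝ) →ₗ[ℝ] (m → ℝ)) (b : m → ℝ)
  (W₁ : Matrix m m ℝ) (W₂ : Matrix p p ℝ) (W₃ : Matrix n n ℝ)

theorem tikhonov_smul_smul (y : p → ℝ) (x : n → ℝ) (α β : ℝ) :
    tikhonov A₀ 𝒜 b W₁ W₂ W₃ (α • y, β • x) =
      (b - β • A₀ *ᵥ x - (α * β) • 𝒜 y x) ⬝ᵥ (W₁ *ᵥ (b - β • A₀ *ᵥ x - (α * β) • 𝒜 y x))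
        + α ^ 2 * (y ⬝ᵥ (W₂ *ᵥ y)) + β ^ 2 * (x ⬝ᵥ (W₃ *ᵥ x)) := by
  rw [tikhonov, smul_dotProduct_mulVec_smul, smul_dotProduct_mulVec_smul]
  simp only [mulVec_smul, map_smul, LinearMap.smul_apply, smul_smul, mul_comm β α]

theorem not_convexOn_tikhonov (hW₁ : W₁.PosDef) (h𝒜 : ∃ y x, 𝒜 y x ≠ 0) :
    ¬ ConvexOn ℝ univ (tikhonov A₀ 𝒜 b W₁ W₂ W₃) := by
  obtain ⟨y, x, hB⟩ := h𝒜
  intro hconv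
  set a := A₀ *ᵥ x
  set B := 𝒜 y x
  have hsymm : W₁.IsSymm := by simpa [IsHermitian, IsSymm] using hW₁.1
  have hB_pos : 0 < B ⬝ᵥ (W₁ *ᵥ B) := by simpa using hW₁.dotProduct_mulVec_pos hB
  have hplane := hconv.comp_linearMap
    ((LinearMap.toSpanSingleton ℝ _ y).prodMap (LinearMap.toSpanSingleton ℝ _ x))
  rw [preimage_univ] at hplane
  -- `hmid` below reduces to `0 ≤ c - 4 ‖B‖² t² - 4 ⟨a, B⟩ t`, with `c` the third argument here
  obtain ⟨t, ht⟩ := exists_lt_mul_sq_add_mul (by positivity : 0 < 4 * (B ⬝ᵥ (W₁ *ᵥ B)))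
    (4 * (a ⬝ᵥ (W₁ *ᵥ B))) (2 * (a ⬝ᵥ (W₁ *ᵥ a)) + 2 * (B ⬝ᵥ (W₁ *ᵥ B))
      - 4 * (b ⬝ᵥ (W₁ *ᵥ B)) + 2 * (y ⬝ᵥ (W₂ *ᵥ y)) + 2 * (x ⬝ᵥ (W₃ *ᵥ x)))
  have hmid := hplane.two_mul_le_add_sub (t, -t) (1, 1)
  simp only [Function.comp_apply, LinearMap.prodMap_apply, LinearMap.toSpanSingleton_apply,
    Prod.mk_add_mk, Prod.mk_sub_mk, tikhonov_smul_smul,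
    hsymm.dotProduct_mulVec_sub_smul_sub_smul] at hmid
  linarith

end Tikhonov

theorem tikhonov_not_convex_general {l p n : ℕ}
    (A₀ : Matrix (Fin l) (Fin n) ℝ)
    (𝒜 : (Fin p → ℝ) →ₗ[ℝ] (Fin n → ℝ) →ₗ[ℝ] (Fin l → ℝ))
    (h𝒜 : ∃ y₀ x₀, 𝒜 y₀ x₀ ≠ 0)
    (b : Fin l → ℝ)
    (Γ₁ : Matrix (Fin l) (Fin l) ℝ) (hΓ₁ : Γ₁.PosDef)
    (Γ₂ : Matrix (Fin p) (Fin p) ℝ)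
    (Γ₃ : Matrix (Fin n) (Fin n) ℝ)
    (Φ : (Fin p → ℝ) × (Fin n → ℝ) → ℝ)
    (hΦ : ∀ y x, Φ (y, x) =
      (b - A₀ *ᵥ x - 𝒜 y x) ⬝ᵥ (Γ₁⁻¹ *ᵥ (b - A₀ *ᵥ x - 𝒜 y x))
      + y ⬝ᵥ (Γ₂⁻¹ *ᵥ y) + x ⬝ᵥ (Γ₃⁻¹ *ᵥ x)) :
    ¬ ConvexOn ℝ Set.univ Φ := by
  have hΦ_eq : Φ = tikhonov A₀ 𝒜 b Γ₁⁻¹ Γ₂⁻¹ Γ₃⁻¹ := funext fun z => hΦ z.1 z.2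
  exact hΦ_eq ▸ not_convexOn_tikhonov A₀ 𝒜 b Γ₁⁻¹ Γ₂⁻¹ Γ₃⁻¹ hΓ₁.inv h𝒜

/-- The Tikhonov functional of the bilinear inverse problem is never convex. -/
theorem tikhonov_not_convex {l p n : ℕ}
    (A₀ : Matrix (Fin l) (Fin n) ℝ) (hA₀ : A₀ ≠ 0)
    (𝒜 : (Fin p → ℝ) →ₗ[ℝ] (Fin n → ℝ) →ₗ[ℝ] (Fin l → ℝ))
    (h𝒜 : ∃ y₀ x₀, 𝒜 y₀ x₀ ≠ 0)
    (b : Fin l → ℝ)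
    (Γ₁ : Matrix (Fin l) (Fin l) ℝ) (hΓ₁ : Γ₁.PosDef)
    (Γ₂ : Matrix (Fin p) (Fin p) ℝ) (hΓ₂ : Γ₂.PosDef)
    (Γ₃ : Matrix (Fin n) (Fin n) ℝ) (hΓ₃ : Γ₃.PosDef)
    (Φ : (Fin p → ℝ) × (Fin n → ℝ) → ℝ)
    (hΦ : ∀ y x, Φ (y, x) =
      (b - A₀ *ᵥ x - 𝒜 y x) ⬝ᵥ (Γ₁⁻¹ *ᵥ (b - A₀ *ᵥ x - 𝒜 y x))
      + y ⬝ᵥ (Γ₂⁻¹ *ᵥ y) + x ⬝ᵥ (Γ₃⁻¹ *ᵥ x)) :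
    ¬ ConvexOn ℝ Set.univ Φ :=
  tikhonov_not_convex_general A₀ 𝒜 h𝒜 b Γ₁ hΓ₁ Γ₂ Γ₃ Φ hΦ
end

section
/- Let Φ(y,x) = (1 - x - yx)² + β(y² + x²) on ℝ², with β > 0. Then (y,x) ∈ ℝ² is a critical point of Φ if and only if x = (1+y)/((1+y)² + β) and y satisfies the quintic equation y⁵ + 4y⁴ + 2(3+β)y³ + 4(1+β)y² + β(2+β)y - 1 = 0. -/
/-!
Both partial derivatives of `Φ` are linear in `x`: `∂ₓΦ = 0` solves to
`x = (1 + y) / ((1 + y)² + β)`, and substituting this into `∂ᵧΦ = 0` leaves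
`β (y ((1 + y)² + β)² - (1 + y)) = 0`, whose bracket expands to the quintic.
-/

open ContinuousLinearMap

theorem smul_fst_add_smul_snd_eq_zero_iff {R : Type*} [CommSemiring R] [TopologicalSpace R]
    [IsTopologicalSemiring R] (a b : R) :
    a • fst R R R + b • snd R R R = 0 ↔ a = 0 ∧ b = 0 := by
  refine ⟨fun h => ⟨by simpa using congr($h (1, 0)), by simpa using congr($h (0, 1))⟩, ?_⟩
  rintro ⟨rfl, rfl⟩
  ext <;> simp

theorem hasFDerivAt_penalized_sq_residual (β y x : ℝ) :
    HasFDerivAt (fun q : ℝ × ℝ => (1 - q.2 - q.1 * q.2) ^ 2 + β * (q.1 ^ 2 + q.2 ^ 2))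
      ((2 * (β * y - (1 - x - y * x) * x)) • fst ℝ ℝ ℝ
        + (2 * (β * x - (1 - x - y * x) * (1 + y))) • snd ℝ ℝ ℝ) (y, x) := by
  have hfst : HasFDerivAt (fun q : ℝ × ℝ => q.1) (fst ℝ ℝ ℝ) (y, x) := hasFDerivAt_fst
  have hsnd : HasFDerivAt (fun q : ℝ × ℝ => q.2) (snd ℝ ℝ ℝ) (y, x) := hasFDerivAt_snd
  have h := (((hsnd.const_sub 1).sub (hfst.fun_mul hsnd)).pow 2).add
    (((hfst.pow 2).add (hsnd.pow 2)).const_mul β)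
  refine h.congr_fderiv ?_
  ext <;> simp <;> ring

theorem half_gradient_eq_zero_iff {β : ℝ} (hβ : 0 < β) (y x : ℝ) :
    (β * y - (1 - x - y * x) * x = 0 ∧ β * x - (1 - x - y * x) * (1 + y) = 0) ↔
      (x = (1 + y) / ((1 + y) ^ 2 + β) ∧ y * ((1 + y) ^ 2 + β) ^ 2 - (1 + y) = 0) := by
  have hD : (1 + y) ^ 2 + β ≠ 0 := by positivity
  have hx : β * x - (1 - x - y * x) * (1 + y) = 0 ↔ x = (1 + y) / ((1 + y) ^ 2 + β) := by
    rw [eq_div_iff hD]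
    constructor <;> intro h <;> linear_combination h
  rw [and_comm, hx]
  refine and_congr_right fun hx => ?_
  subst hx
  -- at this `x` the residual `1 - x (1 + y)` equals `β / ((1 + y)² + β)`
  have hy : β * y - (1 - (1 + y) / ((1 + y) ^ 2 + β) - y * ((1 + y) / ((1 + y) ^ 2 + β)))
        * ((1 + y) / ((1 + y) ^ 2 + β))
      = β * (y * ((1 + y) ^ 2 + β) ^ 2 - (1 + y)) / ((1 + y) ^ 2 + β) ^ 2 := by
    field_simp
    ring
  rw [hy, div_eq_zero_iff, mul_eq_zero, or_iff_left (pow_ne_zero 2 hD), or_iff_right hβ.ne']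

/-- Critical points of `Φ(y,x) = (1 - x - yx)² + β(y² + x²)` are characterized by
`x = (1+y)/((1+y)² + β)` and the quintic equation for `y`. -/
theorem critical_points_quintic (β : ℝ) (hβ : 0 < β)
    (Φ : ℝ × ℝ → ℝ)
    (hΦ : ∀ y x, Φ (y, x) = (1 - x - y * x) ^ 2 + β * (y ^ 2 + x ^ 2)) :
    ∀ y x : ℝ, fderiv ℝ Φ (y, x) = 0 ↔
      (x = (1 + y) / ((1 + y) ^ 2 + β) ∧
        y ^ 5 + 4 * y ^ 4 + 2 * (3 + β) * y ^ 3 + 4 * (1 + β) * y ^ 2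
          + β * (2 + β) * y - 1 = 0) := by
  obtain rfl : Φ = fun q => (1 - q.2 - q.1 * q.2) ^ 2 + β * (q.1 ^ 2 + q.2 ^ 2) :=
    funext fun q => hΦ q.1 q.2
  intro y x
  have quintic_eq : y ^ 5 + 4 * y ^ 4 + 2 * (3 + β) * y ^ 3 + 4 * (1 + β) * y ^ 2
      + β * (2 + β) * y - 1 = y * ((1 + y) ^ 2 + β) ^ 2 - (1 + y) := by ring
  rw [(hasFDerivAt_penalized_sq_residual β y x).fderiv, smul_fst_add_smul_snd_eq_zero_iff,
    quintic_eq, ← half_gradient_eq_zero_iff hβ]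
  simp only [mul_eq_zero, two_ne_zero, false_or]
end

section
/- The function Φ(y,x) = (1 - x - yx)² + β(y² + x²) with β = 0.1 has at least two distinct local minima on ℝ². -/
open Set

/-- If `Φ` is continuous and strictly larger on the boundary of a box than at some
interior point `q`, then `Φ` has a local minimum inside the box. -/
lemma box_local_min (Φ : ℝ × ℝ → ℝ) (hc : Continuous Φ) (a b c d : ℝ) (q : ℝ × ℝ)
    (hq : q ∈ Ioo a b ×ˢ Ioo c d)
    (hbd : ∀ p ∈ Icc a b ×ˢ Icc c d,
      (p.1 = a ∨ p.1 = b ∨ p.2 = c ∨ p.2 = d) → Φ q < Φ p) :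
    ∃ p ∈ Ioo a b ×ˢ Ioo c d, IsLocalMin Φ p := by
  have hK : IsCompact (Icc a b ×ˢ Icc c d) := (isCompact_Icc).prod isCompact_Icc
  have hqK : q ∈ Icc a b ×ˢ Icc c d :=
    ⟨⟨hq.1.1.le, hq.1.2.le⟩, ⟨hq.2.1.le, hq.2.2.le⟩⟩
  obtain ⟨p, hpK, hmin⟩ := hK.exists_isMinOn ⟨q, hqK⟩ hc.continuousOn
  have hpq : Φ p ≤ Φ q := hmin hqK
  have hnb : ¬ (p.1 = a ∨ p.1 = b ∨ p.2 = c ∨ p.2 = d) := fun h =>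
    absurd (hbd p hpK h) (not_lt.2 hpq)
  push_neg at hnb
  obtain ⟨h1, h2, h3, h4⟩ := hnb
  have hpI : p ∈ Ioo a b ×ˢ Ioo c d :=
    ⟨⟨lt_of_le_of_ne hpK.1.1 (Ne.symm h1), lt_of_le_of_ne hpK.1.2 h2⟩,
     ⟨lt_of_le_of_ne hpK.2.1 (Ne.symm h3), lt_of_le_of_ne hpK.2.2 h4⟩⟩
  refine ⟨p, hpI, ?_⟩
  have hopen : IsOpen (Ioo a b ×ˢ Ioo c d) := (isOpen_Ioo).prod isOpen_Ioo
  have hsub : (Ioo a b ×ˢ Ioo c d) ⊆ Icc a b ×ˢ Icc c d :=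
    prod_mono Ioo_subset_Icc_self Ioo_subset_Icc_self
  exact Filter.eventually_of_mem (hopen.mem_nhds hpI) fun z hz => hmin (hsub hz)

/-- For `β = 0.1`, the function `Φ(y,x) = (1 - x - yx)² + β(y² + x²)` has at least
two distinct local minima. -/
theorem two_local_minima
    (Φ : ℝ × ℝ → ℝ)
    (hΦ : ∀ y x, Φ (y, x) = (1 - x - y * x) ^ 2 + (0.1 : ℝ) * (y ^ 2 + x ^ 2)) :
    ∃ p₁ p₂ : ℝ × ℝ, p₁ ≠ p₂ ∧ IsLocalMin Φ p₁ ∧ IsLocalMin Φ p₂ := by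
  have hΦ' : Φ = fun p : ℝ × ℝ =>
      (1 - p.2 - p.1 * p.2) ^ 2 + (0.1 : ℝ) * (p.1 ^ 2 + p.2 ^ 2) := by
    funext p; obtain ⟨y, x⟩ := p; exact hΦ y x
  have hc : Continuous Φ := by rw [hΦ']; fun_prop
  obtain ⟨p₁, hp₁, hm₁⟩ := box_local_min Φ hc (-2.5) (-1) (-2) (-0.5) (-1.74, -1.14)
    (by norm_num)
    (by
      rintro ⟨y, x⟩ ⟨⟨hy1, hy2⟩, hx1, hx2⟩ h
      rw [hΦ (-1.74) (-1.14), hΦ y x]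
      simp only at hy1 hy2 hx1 hx2
      rcases h with h | h | h | h <;> simp only at h <;> subst h
      · nlinarith [sq_nonneg (x + 0.64)]
      · nlinarith [sq_nonneg x]
      · nlinarith [sq_nonneg (y + 1.46)]
      · nlinarith [sq_nonneg (y + 2.14)])
  obtain ⟨p₂, hp₂, hm₂⟩ := box_local_min Φ hc (-0.2) 0.9 0.2 1.3 (0.36, 0.7)
    (by norm_num)
    (by
      rintro ⟨y, x⟩ ⟨⟨hy1, hy2⟩, hx1, hx2⟩ h
      rw [hΦ 0.36 0.7, hΦ y x]
      simp only at hy1 hy2 hx1 hx2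
      rcases h with h | h | h | h <;> simp only at h <;> subst h
      · nlinarith [sq_nonneg (x - 1.08)]
      · nlinarith [sq_nonneg (x - 0.51)]
      · nlinarith [sq_nonneg (y - 0.9), mul_nonneg (sub_nonneg.2 hy1) (sub_nonneg.2 hy1)]
      · nlinarith [sq_nonneg (y + 0.22)])
  refine ⟨p₁, p₂, ?_, hm₁, hm₂⟩
  intro h
  have h1 : p₁.1 < -1 := hp₁.1.2
  have h2 : (-0.2 : ℝ) < p₂.1 := hp₂.1.1
  rw [h] at h1
  linarith
end
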